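/- In ℂ[x₁,x₂,x₃,x₄] set ε₁ = ∑ᵢ xᵢ², ε₂ = ∑_{i<j} xᵢ²xⱼ², ε₃ = ∑_{i<j<k} xᵢ²xⱼ²xₖ², ε₄ = x₁²x₂²x₃²x₄², and define the F₄ basic invariants y₁ = 288ε₂ε₄ − 108ε₁²ε₄ − 8ε₂³ + 3ε₁²ε₂², y₂ = 12ε₄ − 3ε₁ε₃ + ε₂², y₃ = 6ε₃ − ε₁ε₂, y₄ = ε₁. Then the symmetric 4×4 matrix with entries g^{ij} := ∑_{a=1}^{4} (∂yᵢ/∂xₐ)(∂yⱼ/∂xₐ) satisfies, as identities of polynomials: g^{11} = 1152y₂²y₃ − 144y₁y₂y₄ + 1152y₂y₃²y₄ − 144y₁y₃y₄² + 288y₃³y₄², g^{12} = −96y₂²y₄ − 48y₂y₃y₄², g^{22} = −8y₂y₃ − y₁y₄ + 3y₃²y₄, g^{13} = 192y₂² + 120y₂y₃y₄ − 12y₁y₄² + 12y₃²y₄², g^{23} = 2y₁ − 6y₃² − 8y₂y₄², g^{33} = 20y₂y₄ − 4y₃y₄², g^{14} = 24y₁, g^{24} = 16y₂, g^{34} = 12y₃,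 g^{44} = 4y₄. -/

import Mathlib

open MvPolynomial

noncomputable section

/-! The elementary symmetric polynomials of `x₁², …, x₄²` and the `F₄` basic invariants. -/

def e₁F4 : MvPolynomial (Fin 4) ℂ := X 0 ^ 2 + X 1 ^ 2 + X 2 ^ 2 + X 3 ^ 2
def e₂F4 : MvPolynomial (Fin 4) ℂ :=
  X 0 ^ 2 * X 1 ^ 2 + X 0 ^ 2 * X 2 ^ 2 + X 0 ^ 2 * X 3 ^ 2
    + X 1 ^ 2 * X 2 ^ 2 + X 1 ^ 2 * X 3 ^ 2 + X 2 ^ 2 * X 3 ^ 2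
def e₃F4 : MvPolynomial (Fin 4) ℂ :=
  X 0 ^ 2 * X 1 ^ 2 * X 2 ^ 2 + X 0 ^ 2 * X 1 ^ 2 * X 3 ^ 2
    + X 0 ^ 2 * X 2 ^ 2 * X 3 ^ 2 + X 1 ^ 2 * X 2 ^ 2 * X 3 ^ 2
def e₄F4 : MvPolynomial (Fin 4) ℂ := X 0 ^ 2 * X 1 ^ 2 * X 2 ^ 2 * X 3 ^ 2

/-- The `F₄` basic invariant of degree 12. -/
def y₁F4 : MvPolynomial (Fin 4) ℂ :=
  288 * e₂F4 * e₄F4 - 108 * e₁F4 ^ 2 * e₄F4 - 8 * e₂F4 ^ 3 + 3 * e₁F4 ^ 2 * e₂F4 ^ 2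

/-- The `F₄` basic invariant of degree 8. -/
def y₂F4 : MvPolynomial (Fin 4) ℂ := 12 * e₄F4 - 3 * e₁F4 * e₃F4 + e₂F4 ^ 2

/-- The `F₄` basic invariant of degree 6. -/
def y₃F4 : MvPolynomial (Fin 4) ℂ := 6 * e₃F4 - e₁F4 * e₂F4

/-- The `F₄` basic invariant of degree 2. -/
def y₄F4 : MvPolynomial (Fin 4) ℂ := e₁F4

/-! The pairing `g(p, q) = ∑ₐ ∂ₐp ∂ₐq` is a symmetric biderivation, so each `g^{ij} = g(yᵢ, yⱼ)`
is a polynomial in the `ε`'s and the Gram matrix `g(ε_k, ε_l)`. With `tₐ = xₐ²` one has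
`g(ε_k, ε_l) = 4 ∑ₐ tₐ (∂ε_k/∂tₐ)(∂ε_l/∂tₐ)`, which is again a polynomial in the `ε`'s; the
claimed formulas then become polynomial identities in `ε₁, …, ε₄` treated as indeterminates. -/

namespace MvPolynomial

variable {σ R : Type*} [Fintype σ]

section CommSemiring

variable [CommSemiring R]

def gradPairing (p q : MvPolynomial σ R) : MvPolynomial σ R :=
  ∑ a, pderiv a p * pderiv a q

theorem gradPairing_comm (p q : MvPolynomial σ R) : gradPairing p q = gradPairing q p := by
  simp only [gradPairing, mul_comm]

theorem gradPairing_add_left (p q r : MvPolynomial σ R) :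
    gradPairing (p + q) r = gradPairing p r + gradPairing q r := by
  simp only [gradPairing, map_add, add_mul, Finset.sum_add_distrib]

theorem gradPairing_mul_left (p q r : MvPolynomial σ R) :
    gradPairing (p * q) r = p * gradPairing q r + q * gradPairing p r := by
  simp only [gradPairing, Derivation.leibniz, smul_eq_mul, add_mul, mul_assoc,
    Finset.sum_add_distrib, Finset.mul_sum]

theorem gradPairing_pow_left (p r : MvPolynomial σ R) (n : ℕ) :
    gradPairing (p ^ n) r = n * p ^ (n - 1) * gradPairing p r := by
  simp only [gradPairing, Derivation.leibniz_pow, nsmul_eq_mul, smul_eq_mul, mul_assoc,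
    Finset.mul_sum]

theorem gradPairing_ofNat_left (n : ℕ) [n.AtLeastTwo] (r : MvPolynomial σ R) :
    gradPairing (ofNat(n) : MvPolynomial σ R) r = 0 := by
  simp [gradPairing, ← map_ofNat C n]

theorem gradPairing_add_right (p q r : MvPolynomial σ R) :
    gradPairing r (p + q) = gradPairing r p + gradPairing r q := by
  simp only [gradPairing_comm r, gradPairing_add_left]

theorem gradPairing_mul_right (p q r : MvPolynomial σ R) :
    gradPairing r (p * q) = p * gradPairing r q + q * gradPairing r p := by
  simp only [gradPairing_comm r, gradPairing_mul_left]

theorem gradPairing_pow_right (p r : MvPolynomial σ R) (n : ℕ) :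
    gradPairing r (p ^ n) = n * p ^ (n - 1) * gradPairing r p := by
  simp only [gradPairing_comm r, gradPairing_pow_left]

theorem gradPairing_ofNat_right (n : ℕ) [n.AtLeastTwo] (r : MvPolynomial σ R) :
    gradPairing r (ofNat(n) : MvPolynomial σ R) = 0 := by
  rw [gradPairing_comm, gradPairing_ofNat_left]

end CommSemiring

section CommRing

variable [CommRing R]

theorem gradPairing_sub_left (p q r : MvPolynomial σ R) :
    gradPairing (p - q) r = gradPairing p r - gradPairing q r := by
  simp only [gradPairing, map_sub, sub_mul, Finset.sum_sub_distrib]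

theorem gradPairing_sub_right (p q r : MvPolynomial σ R) :
    gradPairing r (p - q) = gradPairing r p - gradPairing r q := by
  simp only [gradPairing_comm r, gradPairing_sub_left]

end CommRing

end MvPolynomial

theorem gradPairing_e₁F4_e₁F4 : gradPairing e₁F4 e₁F4 = 4 * e₁F4 := by
  simp only [gradPairing, Fin.sum_univ_four, e₁F4, map_add,
    Derivation.leibniz_pow, pderiv_X, Pi.single_apply, Fin.reduceEq, if_true, if_false, smul_eq_mul]
  ring

theorem gradPairing_e₁F4_e₂F4 : gradPairing e₁F4 e₂F4 = 8 * e₂F4 := by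
  simp only [gradPairing, Fin.sum_univ_four, e₁F4, e₂F4, map_add, Derivation.leibniz,
    Derivation.leibniz_pow, pderiv_X, Pi.single_apply, Fin.reduceEq, if_true, if_false, smul_eq_mul]
  ring

theorem gradPairing_e₁F4_e₃F4 : gradPairing e₁F4 e₃F4 = 12 * e₃F4 := by
  simp only [gradPairing, Fin.sum_univ_four, e₁F4, e₃F4, map_add, Derivation.leibniz,
    Derivation.leibniz_pow, pderiv_X, Pi.single_apply, Fin.reduceEq, if_true, if_false, smul_eq_mul]
  ring

theorem gradPairing_e₁F4_e₄F4 : gradPairing e₁F4 e₄F4 = 16 * e₄F4 := by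
  simp only [gradPairing, Fin.sum_univ_four, e₁F4, e₄F4, map_add, Derivation.leibniz,
    Derivation.leibniz_pow, pderiv_X, Pi.single_apply, Fin.reduceEq, if_true, if_false, smul_eq_mul]
  ring

theorem gradPairing_e₂F4_e₂F4 : gradPairing e₂F4 e₂F4 = 4 * e₁F4 * e₂F4 + 12 * e₃F4 := by
  simp only [gradPairing, Fin.sum_univ_four, e₁F4, e₂F4, e₃F4, map_add, Derivation.leibniz,
    Derivation.leibniz_pow, pderiv_X, Pi.single_apply, Fin.reduceEq, if_true, if_false, smul_eq_mul]
  ring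

theorem gradPairing_e₂F4_e₃F4 : gradPairing e₂F4 e₃F4 = 8 * e₁F4 * e₃F4 + 16 * e₄F4 := by
  simp only [gradPairing, Fin.sum_univ_four, e₁F4, e₂F4, e₃F4, e₄F4, map_add, Derivation.leibniz,
    Derivation.leibniz_pow, pderiv_X, Pi.single_apply, Fin.reduceEq, if_true, if_false, smul_eq_mul]
  ring

theorem gradPairing_e₂F4_e₄F4 : gradPairing e₂F4 e₄F4 = 12 * e₁F4 * e₄F4 := by
  simp only [gradPairing, Fin.sum_univ_four, e₁F4, e₂F4, e₄F4, map_add, Derivation.leibniz,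
    Derivation.leibniz_pow, pderiv_X, Pi.single_apply, Fin.reduceEq, if_true, if_false, smul_eq_mul]
  ring

theorem gradPairing_e₃F4_e₃F4 : gradPairing e₃F4 e₃F4 = 4 * e₂F4 * e₃F4 + 12 * e₁F4 * e₄F4 := by
  simp only [gradPairing, Fin.sum_univ_four, e₁F4, e₂F4, e₃F4, e₄F4, map_add, Derivation.leibniz,
    Derivation.leibniz_pow, pderiv_X, Pi.single_apply, Fin.reduceEq, if_true, if_false, smul_eq_mul]
  ring

theorem gradPairing_e₃F4_e₄F4 : gradPairing e₃F4 e₄F4 = 8 * e₂F4 * e₄F4 := by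
  simp only [gradPairing, Fin.sum_univ_four, e₂F4, e₃F4, e₄F4, map_add, Derivation.leibniz,
    Derivation.leibniz_pow, pderiv_X, Pi.single_apply, Fin.reduceEq, if_true, if_false, smul_eq_mul]
  ring

theorem gradPairing_e₄F4_e₄F4 : gradPairing e₄F4 e₄F4 = 4 * e₃F4 * e₄F4 := by
  simp only [gradPairing, Fin.sum_univ_four, e₃F4, e₄F4, Derivation.leibniz,
    Derivation.leibniz_pow, pderiv_X, Pi.single_apply, Fin.reduceEq, if_true, if_false, smul_eq_mul]
  ring

/-- The intersection form `g^{ij} = (∇yᵢ, ∇yⱼ)` of `F₄` in the basic invariants. -/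
theorem statement_15 :
    (∑ a, pderiv a y₁F4 * pderiv a y₁F4)
      = 1152 * y₂F4 ^ 2 * y₃F4 - 144 * y₁F4 * y₂F4 * y₄F4 + 1152 * y₂F4 * y₃F4 ^ 2 * y₄F4
        - 144 * y₁F4 * y₃F4 * y₄F4 ^ 2 + 288 * y₃F4 ^ 3 * y₄F4 ^ 2 ∧
    (∑ a, pderiv a y₁F4 * pderiv a y₂F4)
      = -96 * y₂F4 ^ 2 * y₄F4 - 48 * y₂F4 * y₃F4 * y₄F4 ^ 2 ∧
    (∑ a, pderiv a y₂F4 * pderiv a y₂F4)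
      = -8 * y₂F4 * y₃F4 - y₁F4 * y₄F4 + 3 * y₃F4 ^ 2 * y₄F4 ∧
    (∑ a, pderiv a y₁F4 * pderiv a y₃F4)
      = 192 * y₂F4 ^ 2 + 120 * y₂F4 * y₃F4 * y₄F4 - 12 * y₁F4 * y₄F4 ^ 2
        + 12 * y₃F4 ^ 2 * y₄F4 ^ 2 ∧
    (∑ a, pderiv a y₂F4 * pderiv a y₃F4)
      = 2 * y₁F4 - 6 * y₃F4 ^ 2 - 8 * y₂F4 * y₄F4 ^ 2 ∧
    (∑ a, pderiv a y₃F4 * pderiv a y₃F4) = 20 * y₂F4 * y₄F4 - 4 * y₃F4 * y₄F4 ^ 2 ∧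
    (∑ a, pderiv a y₁F4 * pderiv a y₄F4) = 24 * y₁F4 ∧
    (∑ a, pderiv a y₂F4 * pderiv a y₄F4) = 16 * y₂F4 ∧
    (∑ a, pderiv a y₃F4 * pderiv a y₄F4) = 12 * y₃F4 ∧
    (∑ a, pderiv a y₄F4 * pderiv a y₄F4) = 4 * y₄F4 := by
  simp only [← gradPairing.eq_1]
  refine ⟨?_, ?_, ?_, ?_, ?_, ?_, ?_, ?_, ?_, ?_⟩ <;>
    simp only [y₁F4, y₂F4, y₃F4, y₄F4, gradPairing_add_left, gradPairing_add_right,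
      gradPairing_sub_left, gradPairing_sub_right, gradPairing_mul_left, gradPairing_mul_right,
      gradPairing_pow_left, gradPairing_pow_right, gradPairing_ofNat_left, gradPairing_ofNat_right,
      gradPairing_comm e₂F4 e₁F4, gradPairing_comm e₃F4 e₁F4, gradPairing_comm e₄F4 e₁F4,
      gradPairing_comm e₃F4 e₂F4, gradPairing_comm e₄F4 e₂F4, gradPairing_comm e₄F4 e₃F4,
      gradPairing_e₁F4_e₁F4, gradPairing_e₁F4_e₂F4, gradPairing_e₁F4_e₃F4, gradPairing_e₁F4_e₄F4,
      gradPairing_e₂F4_e₂F4, gradPairing_e₂F4_e₃F4, gradPairing_e₂F4_e₄F4, gradPairing_e₃F4_e₃F4,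
      gradPairing_e₃F4_e₄F4, gradPairing_e₄F4_e₄F4] <;>
    ring
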